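/- Let m, j be integers with m ≥ 4, m even, and 1 ≤ j < m/2. If the generalized Pappus graph P(m, j, m/2) admits a neighborhood 3-balanced coloring, then 3 divides m. -/

import Mathlib

/-- A coloring `ℓ : V → ZMod 3` of a simple graph `G` is neighborhood 3-balanced if
every vertex has an equal number of neighbors of each of the three colors. -/
def NBalanced {V : Type*} (G : SimpleGraph V) (ℓ : V → ZMod 3) : Prop :=
  ∀ v : V, ∀ i j : ZMod 3,
    {w | G.Adj v w ∧ ℓ w = i}.ncard = {w | G.Adj v w ∧ ℓ w = j}.ncard

/-- The generalized Pappus graph `P(m, j, k)`.  Vertices: `Sum.inl x` are the exterior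
vertices `v_x`, `Sum.inr (Sum.inl x)` the middle vertices `u_x`, and
`Sum.inr (Sum.inr x)` the interior vertices `w_x`, for `x : ZMod m`.
Edges: `v_i v_{i+1}`, `v_i u_i`, `u_i w_{i+j}`, `u_i w_{i-j}`, and `w_i w_{i+k}`. -/
def genPappus (m j k : ℕ) : SimpleGraph (ZMod m ⊕ ZMod m ⊕ ZMod m) :=
  SimpleGraph.fromRel (fun a b =>
    match a, b with
    | Sum.inl x, Sum.inl y => y = x + 1
    | Sum.inl x, Sum.inr (Sum.inl y) => y = x
    | Sum.inr (Sum.inl x), Sum.inr (Sum.inr y) =>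
        y = x + (j : ZMod m) ∨ y = x - (j : ZMod m)
    | Sum.inr (Sum.inr x), Sum.inr (Sum.inr y) => y = x + (k : ZMod m)
    | _, _ => False)

/-!
Let `β y` be the color of the middle vertex `u_y` and `d = 2j`. Every vertex has degree 3
(`w_{t+m/2} = w_{t-m/2}`), so a balanced coloring gives its three neighbors three distinct colors.
At `w_{y+j}` this gives `β (y + d) ≠ β y`; at `w_t` it expresses the color of `w_{t+m/2}` as
`-(β (t - j) + β (t + j))`, and feeding this into `u_{y+d+m/2}` yields `β (y + 2d) ≠ β y`.
In `ZMod 3` three distinct values form an arithmetic progression, so `β (y + n d) = β y + n e`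
with `e = β (y + d) - β y ≠ 0`; taking `n = m` gives `m e = 0`, hence `3 ∣ m`.
-/

theorem zmod_three_add_add_eq_zero_of_ne :
    ∀ a b c : ZMod 3, a ≠ b → b ≠ c → a ≠ c → a + b + c = 0 := by
  decide

theorem zmod_three_sub_eq_sub_of_ne :
    ∀ a b c : ZMod 3, b ≠ a → c ≠ b → c ≠ a → c - b = b - a := by
  decide

theorem apply_add_nsmul_of_sub_eq_sub {M A : Type*} [AddMonoid M] [AddCommGroup A]
    {f : M → A} {d : M} (h : ∀ y, f (y + d + d) - f (y + d) = f (y + d) - f y)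
    (y : M) (n : ℕ) :
    f (y + n • d) = f y + n • (f (y + d) - f y) := by
  induction n generalizing y with
  | zero => simp
  | succ n ih =>
    rw [succ_nsmul', ← add_assoc, ih, h, succ_nsmul']
    abel

theorem three_dvd_of_apply_add_ne {M : Type*} [AddMonoid M] {β : M → ZMod 3} {d : M}
    (h₁ : ∀ y, β (y + d) ≠ β y) (h₂ : ∀ y, β (y + d + d) ≠ β y) {n : ℕ}
    (hn : n • d = 0) :
    3 ∣ n := by
  have hstep (y : M) : β (y + d + d) - β (y + d) = β (y + d) - β y :=
    zmod_three_sub_eq_sub_of_ne _ _ _ (h₁ y) (h₁ (y + d)) (h₂ y)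
  have hcycle := apply_add_nsmul_of_sub_eq_sub hstep 0 n
  rw [hn, add_zero, left_eq_add, nsmul_eq_mul] at hcycle
  have hn3 : (n : ZMod 3) = 0 :=
    (mul_eq_zero.1 hcycle).resolve_right (sub_ne_zero.2 (h₁ 0))
  exact (ZMod.natCast_eq_zero_iff n 3).1 hn3

section Balanced

variable {V : Type*} {G : SimpleGraph V} {ℓ : V → ZMod 3}

theorem NBalanced.apply_ne_of_neighborSet_eq (hb : NBalanced G ℓ) {v p q r : V}
    (hv : G.neighborSet v = {p, q, r}) (hpq : p ≠ q) : ℓ p ≠ ℓ q := by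
  intro hcolor
  have hadj (w : V) : G.Adj v w ↔ w = p ∨ w = q ∨ w = r := by
    rw [← SimpleGraph.mem_neighborSet, hv]
    rfl
  obtain ⟨i, hip, hir⟩ :=
    (by decide : ∀ a b : ZMod 3, ∃ i, i ≠ a ∧ i ≠ b) (ℓ p) (ℓ r)
  have hempty : {w | G.Adj v w ∧ ℓ w = i} = ∅ := by
    refine Set.eq_empty_of_forall_notMem fun w ⟨hw, hwi⟩ => ?_
    rcases (hadj w).1 hw with rfl | rfl | rfl
    · exact hip hwi.symm
    · exact hip (hwi.symm.trans hcolor.symm)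
    · exact hir hwi.symm
  have hpair : ({p, q} : Set V) ⊆ {w | G.Adj v w ∧ ℓ w = ℓ p} := by
    rintro w (rfl | rfl)
    · exact ⟨(hadj w).2 (Or.inl rfl), rfl⟩
    · exact ⟨(hadj w).2 (Or.inr (Or.inl rfl)), hcolor.symm⟩
  have hfin : {w | G.Adj v w ∧ ℓ w = ℓ p}.Finite :=
    (Set.toFinite {p, q, r}).subset fun w hw => hv ▸ hw.1
  have hcard := Set.ncard_le_ncard hpair hfin
  rw [Set.ncard_pair hpq, hb v (ℓ p) i, hempty, Set.ncard_empty] at hcard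
  omega

theorem NBalanced.add_add_eq_zero_of_neighborSet_eq (hb : NBalanced G ℓ) {v p q r : V}
    (hv : G.neighborSet v = {p, q, r}) (hpq : p ≠ q) (hqr : q ≠ r) (hpr : p ≠ r) :
    ℓ p + ℓ q + ℓ r = 0 := by
  have hv_qrp : G.neighborSet v = {q, r, p} := by rw [hv, Set.insert_comm, Set.pair_comm]
  have hv_prq : G.neighborSet v = {p, r, q} := by rw [hv, Set.pair_comm q]
  exact zmod_three_add_add_eq_zero_of_ne _ _ _ (hb.apply_ne_of_neighborSet_eq hv hpq)
    (hb.apply_ne_of_neighborSet_eq hv_qrp hqr) (hb.apply_ne_of_neighborSet_eq hv_prq hpr)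

end Balanced

namespace genPappus

variable {m j k : ℕ}

theorem neighborSet_inr_inl (x : ZMod m) :
    (genPappus m j k).neighborSet (.inr (.inl x)) =
      {.inr (.inr (x + j)), .inr (.inr (x - j)), .inl x} := by
  ext (y | y | y) <;> simp [genPappus, eq_comm]

theorem neighborSet_inr_inr (hk : (k : ZMod m) ≠ 0) (x : ZMod m) :
    (genPappus m j k).neighborSet (.inr (.inr x)) =
      {.inr (.inl (x - j)), .inr (.inl (x + j)), .inr (.inr (x + k)), .inr (.inr (x - k))} := by
  ext (y | y | y) <;> simp [genPappus]
  · constructor <;> rintro (rfl | rfl) <;> simp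
  · constructor
    · rintro ⟨-, rfl | rfl⟩ <;> simp
    · rintro (rfl | rfl) <;> simpa [eq_comm (a := x)] using hk

theorem neighborSet_inr_inr_of_add_self (hk : (k : ZMod m) ≠ 0) (hkk : (k : ZMod m) + k = 0)
    (x : ZMod m) :
    (genPappus m j k).neighborSet (.inr (.inr x)) =
      {.inr (.inl (x - j)), .inr (.inl (x + j)), .inr (.inr (x + k))} := by
  rw [neighborSet_inr_inr hk, show x - k = x + k by linear_combination -hkk, Set.pair_eq_singleton]

end genPappus

namespace NBalanced

variable {m j k : ℕ} {ℓ : ZMod m ⊕ ZMod m ⊕ ZMod m → ZMod 3}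

theorem genPappus_inr_inr_add_ne (hb : NBalanced (genPappus m j k) ℓ)
    (hj : (j : ZMod m) + j ≠ 0) (x : ZMod m) :
    ℓ (.inr (.inr (x + j))) ≠ ℓ (.inr (.inr (x - j))) :=
  hb.apply_ne_of_neighborSet_eq (genPappus.neighborSet_inr_inl x)
    (fun h => hj (by linear_combination Sum.inr_injective (Sum.inr_injective h)))

theorem genPappus_add_add_eq_zero (hb : NBalanced (genPappus m j k) ℓ)
    (hj : (j : ZMod m) + j ≠ 0) (hk : (k : ZMod m) ≠ 0) (hkk : (k : ZMod m) + k = 0)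
    (x : ZMod m) :
    ℓ (.inr (.inl (x - j))) + ℓ (.inr (.inl (x + j))) + ℓ (.inr (.inr (x + k))) = 0 :=
  hb.add_add_eq_zero_of_neighborSet_eq (genPappus.neighborSet_inr_inr_of_add_self hk hkk x)
    (fun h => hj (by linear_combination -Sum.inl_injective (Sum.inr_injective h)))
    (by simp) (by simp)

theorem genPappus_inr_inl_add_ne (hb : NBalanced (genPappus m j k) ℓ)
    (hj : (j : ZMod m) + j ≠ 0) (hk : (k : ZMod m) ≠ 0) (hkk : (k : ZMod m) + k = 0)
    (y : ZMod m) :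
    ℓ (.inr (.inl (y + (j + j)))) ≠ ℓ (.inr (.inl y)) := by
  have hne := hb.apply_ne_of_neighborSet_eq
    (genPappus.neighborSet_inr_inr_of_add_self hk hkk (y + j))
    (fun h => hj (by linear_combination -Sum.inl_injective (Sum.inr_injective h)))
  rwa [add_sub_cancel_right, add_assoc, ne_comm] at hne

theorem genPappus_inr_inl_add_add_ne (hb : NBalanced (genPappus m j k) ℓ)
    (hj : (j : ZMod m) + j ≠ 0) (hk : (k : ZMod m) ≠ 0) (hkk : (k : ZMod m) + k = 0)
    (y : ZMod m) :
    ℓ (.inr (.inl (y + (j + j) + (j + j)))) ≠ ℓ (.inr (.inl y)) := by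
  intro heq
  have hw (t : ZMod m) :
      ℓ (.inr (.inr (t + k))) = -(ℓ (.inr (.inl (t - j))) + ℓ (.inr (.inl (t + j)))) := by
    linear_combination hb.genPappus_add_add_eq_zero hj hk hkk t
  apply hb.genPappus_inr_inr_add_ne hj (y + (j + j) + k)
  rw [show y + (j + j) + k + j = y + (j + j) + j + k by ring,
    show y + (j + j) + k - j = y + j + k by ring, hw, hw, add_sub_cancel_right,
    add_sub_cancel_right, add_assoc y j j, add_assoc (y + (j + j)) j j, heq, add_comm]

end NBalanced

theorem stmt8_general (m j : ℕ) (hme : Even m) (hj1 : 1 ≤ j) (hj2 : 2 * j < m)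
    (h : ∃ ℓ, NBalanced (genPappus m j (m / 2)) ℓ) : 3 ∣ m := by
  obtain ⟨ℓ, hb⟩ := h
  have hj : (j : ZMod m) + j ≠ 0 := by
    rw [← Nat.cast_add, Ne, ZMod.natCast_eq_zero_iff]
    exact Nat.not_dvd_of_pos_of_lt (by omega) (by omega)
  have hk : ((m / 2 : ℕ) : ZMod m) ≠ 0 := by
    rw [Ne, ZMod.natCast_eq_zero_iff]
    exact Nat.not_dvd_of_pos_of_lt (by omega) (by omega)
  have hkk : ((m / 2 : ℕ) : ZMod m) + (m / 2 : ℕ) = 0 := by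
    obtain ⟨r, rfl⟩ := hme
    rw [← Nat.cast_add, show (r + r) / 2 + (r + r) / 2 = r + r by omega, ZMod.natCast_self]
  exact three_dvd_of_apply_add_ne (β := fun y => ℓ (.inr (.inl y)))
    (hb.genPappus_inr_inl_add_ne hj hk hkk) (hb.genPappus_inr_inl_add_add_ne hj hk hkk)
    (by rw [nsmul_eq_mul, ZMod.natCast_self, zero_mul])

theorem stmt8 (m j : ℕ) (hm : 4 ≤ m) (hme : Even m) (hj1 : 1 ≤ j) (hj2 : 2 * j < m)
    (h : ∃ ℓ, NBalanced (genPappus m j (m / 2)) ℓ) : 3 ∣ m :=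
  stmt8_general m j hme hj1 hj2 h
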